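/- Define k(n) = (Σ_{i,j=0}^{n} C(i+j,i)·C(i+j,j)) / C(2n,n)². Then the supremum of the sequence (k(n)) over all natural numbers n equals 16/9, and this supremum is not attained. -/

import Mathlib

/-!
Write `B n` for the double sum and `a n = C(2n, n)`. Passing from the box `[0, n]²` to
`[0, n + 1]²` adds two arms `∑_{j ≤ n} C(n + 1 + j, j)²` and the corner `a (n + 1)²`. The
terms of an arm grow at least fourfold, so an arm is controlled by its last two terms, and
comparing these with `a n` and `a (n + 1)` gives `9 B n < 16 (a n)²` by induction.
Conversely, `C(2n - s - t, n - s) / a n` tends to `2^{-(s + t)}`, so for every `m` the ratio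
`B n / (a n)²` is eventually almost `(∑_{s < m} 4^{-s})²`, which tends to `16 / 9`.
-/

open Filter Topology Finset

def boxTerm (i j : ℕ) : ℕ := (i + j).choose i * (i + j).choose j

def boxSum (n : ℕ) : ℕ := ∑ i ∈ range (n + 1), ∑ j ∈ range (n + 1), boxTerm i j

/-- One arm of the layer `[0, n + 1]² \ [0, n]²`. -/
def hookSum (n : ℕ) : ℕ := ∑ j ∈ range (n + 1), boxTerm (n + 1) j

noncomputable def boxRatio (n : ℕ) : ℝ := (boxSum n : ℝ) / (Nat.centralBinom n : ℝ) ^ 2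

theorem boxTerm_comm (i j : ℕ) : boxTerm i j = boxTerm j i := by
  rw [boxTerm, boxTerm, Nat.add_comm, Nat.mul_comm]

theorem boxTerm_eq_sq (i j : ℕ) : boxTerm i j = (i + j).choose i ^ 2 := by
  rw [boxTerm, ← Nat.choose_symm_add, sq]

theorem boxSum_succ (n : ℕ) :
    boxSum (n + 1) = boxSum n + 2 * hookSum n + Nat.centralBinom (n + 1) ^ 2 := by
  have hdiag : boxTerm (n + 1) (n + 1) = Nat.centralBinom (n + 1) ^ 2 := by
    rw [boxTerm_eq_sq, Nat.centralBinom_eq_two_mul_choose, two_mul]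
  simp only [boxSum, hookSum, sum_range_succ, sum_add_distrib, hdiag,
    boxTerm_comm _ (n + 1)]
  ring

theorem two_mul_choose_le_choose_succ_succ {m k : ℕ} (h : k < m / 2) :
    2 * m.choose k ≤ (m + 1).choose (k + 1) := by
  rw [Nat.choose_succ_succ', two_mul]
  exact Nat.add_le_add_left (Nat.choose_le_succ_of_lt_half_left h) _

theorem four_mul_boxTerm_le {n j : ℕ} (h : j < n) :
    4 * boxTerm (n + 1) j ≤ boxTerm (n + 1) (j + 1) := by
  have := two_mul_choose_le_choose_succ_succ (m := j + (n + 1)) (k := j) (by omega)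
  rw [boxTerm_comm, boxTerm_comm _ (j + 1), boxTerm_eq_sq, boxTerm_eq_sq,
    show j + 1 + (n + 1) = j + (n + 1) + 1 by ring]
  calc 4 * (j + (n + 1)).choose j ^ 2 = (2 * (j + (n + 1)).choose j) ^ 2 := by ring
    _ ≤ _ := Nat.pow_le_pow_left this 2

theorem three_mul_hookSum_le (n : ℕ) :
    3 * hookSum (n + 1) ≤ 4 * boxTerm (n + 2) n + 3 * boxTerm (n + 2) (n + 1) := by
  set g := boxTerm (n + 2)
  have hgeom : 4 * ∑ j ∈ range n, g j ≤ ∑ j ∈ range n, g (j + 1) := by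
    rw [mul_sum]
    exact sum_le_sum fun j hj => four_mul_boxTerm_le (by simp at hj; omega)
  have hshift := sum_range_succ' g n
  have hlast := sum_range_succ g n
  rw [show hookSum (n + 1) = ∑ j ∈ range (n + 1), g j + g (n + 1) from sum_range_succ _ _]
  omega

theorem centralBinom_succ_eq_two_mul_choose (n : ℕ) :
    Nat.centralBinom (n + 1) = 2 * (2 * n + 1).choose n := by
  rw [Nat.centralBinom_eq_two_mul_choose, show 2 * (n + 1) = 2 * n + 1 + 1 by ring,
    Nat.choose_succ_succ', Nat.choose_symm_half]
  ring

theorem add_two_mul_choose_eq_mul_centralBinom (n : ℕ) :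
    (n + 2) * (2 * n + 2).choose n = (n + 1) * Nat.centralBinom (n + 1) := by
  have := Nat.choose_succ_right_eq (2 * n + 2) n
  rw [show 2 * n + 2 - n = n + 2 by omega] at this
  rw [Nat.centralBinom_eq_two_mul_choose, show 2 * (n + 1) = 2 * n + 2 by ring]
  linarith

theorem hookSum_bound (n : ℕ) :
    18 * hookSum (n + 1) + 16 * Nat.centralBinom (n + 1) ^ 2 ≤
      7 * Nat.centralBinom (n + 2) ^ 2 := by
  have hhook := three_mul_hookSum_le n
  rw [boxTerm_comm, boxTerm_comm _ (n + 1), boxTerm_eq_sq, boxTerm_eq_sq,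
    show n + (n + 2) = 2 * n + 2 by ring, show n + 1 + (n + 2) = 2 * (n + 1) + 1 by ring] at hhook
  have hac := add_two_mul_choose_eq_mul_centralBinom n
  set a := Nat.centralBinom (n + 1)
  set b := (2 * (n + 1) + 1).choose (n + 1)
  set c := (2 * n + 2).choose n
  have hb : Nat.centralBinom (n + 2) = 2 * b := centralBinom_succ_eq_two_mul_choose (n + 1)
  have hab : (n + 2) * b = (2 * n + 3) * a := by
    have := Nat.succ_mul_centralBinom_succ (n + 1)
    rw [hb] at this
    linarith
  rw [hb]
  -- after scaling by `(n + 2)²`, both `b` and `c` become multiples of `a`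
  refine Nat.le_of_mul_le_mul_left (c := (n + 2) ^ 2) ?_ (by positivity)
  calc (n + 2) ^ 2 * (18 * hookSum (n + 1) + 16 * a ^ 2)
      ≤ (n + 2) ^ 2 * (24 * c ^ 2 + 18 * b ^ 2 + 16 * a ^ 2) := by gcongr; omega
    _ = 24 * ((n + 2) * c) ^ 2 + 18 * ((n + 2) * b) ^ 2 + 16 * (n + 2) ^ 2 * a ^ 2 := by ring
    _ = (24 * (n + 1) ^ 2 + 18 * (2 * n + 3) ^ 2 + 16 * (n + 2) ^ 2) * a ^ 2 := by
      rw [hac, hab]; ring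
    _ ≤ 28 * (2 * n + 3) ^ 2 * a ^ 2 := by gcongr; nlinarith
    _ = 28 * ((n + 2) * b) ^ 2 := by rw [hab]; ring
    _ = (n + 2) ^ 2 * (7 * (2 * b) ^ 2) := by ring

theorem nine_mul_boxSum_lt : ∀ n, 9 * boxSum n < 16 * Nat.centralBinom n ^ 2
  | 0 => by decide
  | 1 => by decide
  | n + 2 => by
    have := nine_mul_boxSum_lt (n + 1)
    have := hookSum_bound n
    have hsucc : boxSum (n + 2) =
        boxSum (n + 1) + 2 * hookSum (n + 1) + Nat.centralBinom (n + 2) ^ 2 :=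
      boxSum_succ (n + 1)
    omega

theorem boxRatio_lt (n : ℕ) : boxRatio n < 16 / 9 := by
  have hA : (0 : ℝ) < Nat.centralBinom n := mod_cast Nat.centralBinom_pos n
  rw [boxRatio, div_lt_div_iff₀ (by positivity) (by norm_num)]
  exact_mod_cast (by linarith [nine_mul_boxSum_lt n] :
    boxSum n * 9 < 16 * Nat.centralBinom n ^ 2)

noncomputable def cornerRatio (s t n : ℕ) : ℝ :=
  ((n - s + (n - t)).choose (n - s) : ℝ) / Nat.centralBinom n

theorem cornerRatio_comm (s t n : ℕ) : cornerRatio s t n = cornerRatio t s n := by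
  rw [cornerRatio, cornerRatio, Nat.choose_symm_add, Nat.add_comm]

theorem cornerRatio_zero_zero (n : ℕ) : cornerRatio 0 0 n = 1 := by
  rw [cornerRatio, Nat.sub_zero, ← two_mul, ← Nat.centralBinom_eq_two_mul_choose,
    div_self (mod_cast (Nat.centralBinom_pos n).ne')]

theorem cornerRatio_succ_right {s t n : ℕ} (h : s + t < n) :
    cornerRatio s (t + 1) n = cornerRatio s t n * ((n - t : ℝ) / (2 * n - (s + t))) := by
  have key := Nat.choose_mul_succ_eq (n - s + (n - (t + 1))) (n - s)
  rw [show n - s + (n - (t + 1)) + 1 = n - s + (n - t) by omega,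
    show n - s + (n - t) - (n - s) = n - t by omega] at key
  have hden : (2 * n - (s + t) : ℝ) ≠ 0 := by
    have : (s + t + 1 : ℝ) ≤ n := mod_cast h
    linarith
  have hkey : ((n - s + (n - (t + 1))).choose (n - s) : ℝ) * (2 * n - (s + t))
      = ((n - s + (n - t)).choose (n - s) : ℝ) * (n - t) := by
    have := congrArg (fun x : ℕ => (x : ℝ)) key
    push_cast [Nat.cast_sub (by omega : s ≤ n), Nat.cast_sub (by omega : t + 1 ≤ n),
      Nat.cast_sub (by omega : t ≤ n)] at this
    linarith
  rw [cornerRatio, cornerRatio, div_mul_div_comm, ← hkey, mul_div_mul_right _ _ hden]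

theorem tendsto_cornerRatio_succ_right {s t : ℕ} {L : ℝ}
    (h : Tendsto (cornerRatio s t) atTop (𝓝 L)) :
    Tendsto (cornerRatio s (t + 1)) atTop (𝓝 (L * (1 / 2))) := by
  have hfac : Tendsto (fun n : ℕ => (n - t : ℝ) / (2 * n - (s + t))) atTop (𝓝 (1 / 2)) := by
    convert tendsto_add_mul_div_add_mul_atTop_nhds (-t : ℝ) (-(s + t)) 1 two_ne_zero using 2
    ring_nf
  refine (h.mul hfac).congr' ?_
  filter_upwards [eventually_gt_atTop (s + t)] with n hn
  exact (cornerRatio_succ_right hn).symm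

theorem tendsto_cornerRatio_zero_left (t : ℕ) :
    Tendsto (cornerRatio 0 t) atTop (𝓝 ((1 / 2) ^ t)) := by
  induction t with
  | zero =>
    rw [pow_zero, show cornerRatio 0 0 = fun _ => 1 from funext cornerRatio_zero_zero]
    exact tendsto_const_nhds
  | succ t ih => exact pow_succ (1 / 2 : ℝ) t ▸ tendsto_cornerRatio_succ_right ih

theorem tendsto_cornerRatio (s t : ℕ) :
    Tendsto (cornerRatio s t) atTop (𝓝 ((1 / 2) ^ (s + t))) := by
  induction t with
  | zero => exact funext (cornerRatio_comm 0 s) ▸ tendsto_cornerRatio_zero_left s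
  | succ t ih => exact pow_succ (1 / 2 : ℝ) (s + t) ▸ tendsto_cornerRatio_succ_right ih

theorem sum_boxTerm_corner_le {m n : ℕ} (hmn : m ≤ n + 1) :
    ∑ s ∈ range m, ∑ t ∈ range m, boxTerm (n - s) (n - t) ≤ boxSum n := by
  have hsub : range m ⊆ range (n + 1) := range_subset_range.mpr hmn
  calc ∑ s ∈ range m, ∑ t ∈ range m, boxTerm (n - s) (n - t)
      ≤ ∑ s ∈ range (n + 1), ∑ t ∈ range (n + 1), boxTerm (n - s) (n - t) :=
        (sum_le_sum fun s _ => sum_le_sum_of_subset hsub).trans (sum_le_sum_of_subset hsub)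
    _ = boxSum n := by
      have hreflect (f : ℕ → ℕ) :
          ∑ s ∈ range (n + 1), f (n - s) = ∑ s ∈ range (n + 1), f s := by
        simpa using sum_range_reflect f (n + 1)
      simp only [hreflect]
      exact hreflect fun s => ∑ t ∈ range (n + 1), boxTerm s t

theorem cornerRatio_sq (s t n : ℕ) :
    cornerRatio s t n ^ 2 = boxTerm (n - s) (n - t) / (Nat.centralBinom n : ℝ) ^ 2 := by
  rw [cornerRatio, div_pow, boxTerm_eq_sq, Nat.cast_pow]

theorem sum_sq_cornerRatio_le_boxRatio {m n : ℕ} (hmn : m ≤ n + 1) :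
    ∑ s ∈ range m, ∑ t ∈ range m, cornerRatio s t n ^ 2 ≤ boxRatio n := by
  simp only [cornerRatio_sq, ← sum_div, boxRatio]
  gcongr
  exact_mod_cast sum_boxTerm_corner_le hmn

theorem sum_sq_half_pow_add (m : ℕ) :
    ∑ s ∈ range m, ∑ t ∈ range m, (((1 : ℝ) / 2) ^ (s + t)) ^ 2 =
      (∑ s ∈ range m, ((1 : ℝ) / 4) ^ s) ^ 2 := by
  rw [sq (∑ s ∈ range m, _), sum_mul_sum]
  refine sum_congr rfl fun s _ => sum_congr rfl fun t _ => ?_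
  rw [show (1 : ℝ) / 4 = (1 / 2) ^ 2 by norm_num, ← pow_add, ← pow_mul, ← pow_mul, mul_comm]

theorem exists_lt_boxRatio {c : ℝ} (hc : c < 16 / 9) : ∃ n, c < boxRatio n := by
  have hgeom :
      Tendsto (fun m => (∑ s ∈ range m, ((1 : ℝ) / 4) ^ s) ^ 2) atTop (𝓝 (16 / 9)) := by
    have := (hasSum_geometric_of_lt_one (by norm_num) (by norm_num : (1 : ℝ) / 4 < 1))
      |>.tendsto_sum_nat.pow 2
    norm_num at this ⊢
    exact this
  obtain ⟨m, hm⟩ := (hgeom.eventually (eventually_gt_nhds hc)).exists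
  have hcorner : Tendsto (fun n => ∑ s ∈ range m, ∑ t ∈ range m, cornerRatio s t n ^ 2)
      atTop (𝓝 ((∑ s ∈ range m, ((1 : ℝ) / 4) ^ s) ^ 2)) := by
    rw [← sum_sq_half_pow_add]
    exact tendsto_finsetSum _ fun s _ =>
      tendsto_finsetSum _ fun t _ => (tendsto_cornerRatio s t).pow 2
  obtain ⟨n, hn, hmn⟩ :=
    ((hcorner.eventually (eventually_gt_nhds hm)).and (eventually_ge_atTop m)).exists
  exact ⟨n, hn.trans_le (sum_sq_cornerRatio_le_boxRatio (by omega))⟩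

theorem k_sup_not_attained :
    (⨆ n : ℕ,
      ((∑ i ∈ Finset.range (n + 1), ∑ j ∈ Finset.range (n + 1),
          Nat.choose (i + j) i * Nat.choose (i + j) j : ℕ) : ℝ) /
        ((2 * n).choose n : ℝ) ^ 2) = 16 / 9 ∧
    ∀ n : ℕ,
      ((∑ i ∈ Finset.range (n + 1), ∑ j ∈ Finset.range (n + 1),
          Nat.choose (i + j) i * Nat.choose (i + j) j : ℕ) : ℝ) /
        ((2 * n).choose n : ℝ) ^ 2 < 16 / 9 :=
  ⟨ciSup_eq_of_forall_le_of_forall_lt_exists_gt (fun n => (boxRatio_lt n).le)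
    fun _ hc => exists_lt_boxRatio hc, boxRatio_lt⟩
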